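/- Let η be the linear order of finitely supported functions ω → ω₁ ordered lexicographically, and let η + η denote two consecutive copies of η. Then η + η is order-isomorphic to η. -/

import Mathlib

/-!
Splitting off the first coordinate identifies η with the lexicographic product ω₁ ×ₗ η, in which
the first coordinate dominates. Since η ≅ 1 ×ₗ η and 1 + ω₁ = ω₁, this gives
η + η ≅ 1 ×ₗ η + ω₁ ×ₗ η ≅ (1 + ω₁) ×ₗ η ≅ ω₁ ×ₗ η ≅ η.
-/

open Cardinal

noncomputable section

/-- ω₁ as an ordinal. -/
abbrev om1 : Ordinal := (Cardinal.aleph 1).ord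

/-- The countable ordinals, i.e. ordinals `< ω₁`, as a linearly ordered type. -/
abbrev O1 : Type 1 := {o : Ordinal // o < om1}

instance : Zero O1 := ⟨⟨0, by rw [Cardinal.lt_ord]; simpa using Cardinal.aleph_pos 1⟩⟩

/-- η : the finitely supported functions ω → ω₁, ordered lexicographically:
`f < g` iff `f n < g n` at the least `n` where `f` and `g` differ. -/
abbrev Eta : Type 1 := Lex (ℕ →₀ O1)

namespace Cardinal

variable {c : Cardinal}

def unitSumLexIioOrdOrderIso (hc : ℵ₀ ≤ c) :
    Unit ⊕ₗ {o : Ordinal // o < c.ord} ≃o {o : Ordinal // o < c.ord} := by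
  have one_lt : (1 : Ordinal) < c.ord := lt_ord.2 (by simpa using one_lt_aleph0.trans_le hc)
  let f : Unit ⊕ₗ {o : Ordinal // o < c.ord} → {o : Ordinal // o < c.ord} := fun x =>
    Sum.elim (fun _ => ⟨0, zero_lt_one.trans one_lt⟩)
      (fun a : {o : Ordinal // o < c.ord} => ⟨1 + a, Ordinal.isPrincipal_add_ord hc one_lt a.2⟩)
      (ofLex x)
  refine StrictMono.orderIsoOfSurjective f ?_ ?_
  · rintro (⟨⟩ | a) (⟨⟩ | b) h
    · exact absurd h (lt_irrefl _)
    · exact Subtype.mk_lt_mk.2 (zero_lt_one.trans_le le_self_add)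
    · exact absurd h Sum.Lex.not_inr_lt_inl
    · exact Subtype.mk_lt_mk.2 <|
        (add_lt_add_iff_left 1).2 (Subtype.coe_lt_coe.2 (Sum.Lex.inr_lt_inr_iff.1 h))
  · rintro ⟨b, hb⟩
    rcases eq_or_ne b 0 with rfl | hb0
    · exact ⟨toLex (Sum.inl ()), rfl⟩
    · refine ⟨toLex (Sum.inr ⟨b - 1, (Ordinal.sub_le_self _ _).trans_lt hb⟩), Subtype.ext ?_⟩
      exact Ordinal.add_sub_cancel_of_le (Order.one_le_iff_ne_zero.2 hb0)

end Cardinal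

namespace Finsupp

variable {M : Type*} [Zero M]

def headTailEquiv : (ℕ →₀ M) ≃ M × (ℕ →₀ M) where
  toFun f := (f 0, f.comapDomain Nat.succ Nat.succ_injective.injOn)
  invFun p := (p.2.embDomain ⟨Nat.succ, Nat.succ_injective⟩).update 0 p.1
  left_inv f := by
    ext (_ | n)
    · simp
    · rw [coe_update, Function.update_of_ne n.succ_ne_zero]
      exact (embDomain_apply_self _ _ n).trans (comapDomain_apply _ _ _ n)
  right_inv p := by
    ext n
    · simp
    · rw [comapDomain_apply, coe_update, Function.update_of_ne n.succ_ne_zero]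
      exact embDomain_apply_self _ _ n

@[simp] lemma headTailEquiv_apply_fst (f : ℕ →₀ M) : (headTailEquiv f).1 = f 0 := rfl

@[simp] lemma headTailEquiv_apply_snd (f : ℕ →₀ M) (n : ℕ) :
    (headTailEquiv f).2 n = f (n + 1) := rfl

variable [LinearOrder M]

theorem Lex.toLex_lt_toLex_iff_head_tail {f g : ℕ →₀ M} :
    toLex f < toLex g ↔
      f 0 < g 0 ∨ f 0 = g 0 ∧ toLex (headTailEquiv f).2 < toLex (headTailEquiv g).2 := by
  simp only [Lex.lt_iff, ofLex_toLex, headTailEquiv_apply_snd]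
  constructor
  · rintro ⟨_ | i, hlt, hi⟩
    · exact Or.inl hi
    · exact Or.inr ⟨hlt 0 i.succ_pos, i, fun j hj => hlt (j + 1) (by omega), hi⟩
  · rintro (h0 | ⟨h0, i, hlt, hi⟩)
    · exact ⟨0, fun j hj => absurd hj j.not_lt_zero, h0⟩
    · refine ⟨i + 1, fun j hj => ?_, hi⟩
      rcases j with _ | j
      · exact h0
      · exact hlt j (by omega)

def Lex.headTailOrderIso : Lex (ℕ →₀ M) ≃o M ×ₗ Lex (ℕ →₀ M) where
  toEquiv := ofLex.trans <| headTailEquiv.trans <| (Equiv.prodCongr (.refl M) toLex).trans toLex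
  map_rel_iff' := StrictMono.le_iff_le fun _ _ h =>
    Prod.Lex.toLex_lt_toLex.2 (Lex.toLex_lt_toLex_iff_head_tail.1 h)

def Lex.sumLexSelfOrderIso (e : Unit ⊕ₗ M ≃o M) :
    Lex (ℕ →₀ M) ⊕ₗ Lex (ℕ →₀ M) ≃o Lex (ℕ →₀ M) :=
  (OrderIso.sumLexCongr (Prod.Lex.uniqueProd Unit _).symm headTailOrderIso).trans <|
    (Prod.Lex.sumLexProdLexDistrib _ _ _).symm.trans <|
      (Prod.Lex.prodLexCongr e (.refl _)).trans headTailOrderIso.symm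

end Finsupp

/-- `η + η` (two consecutive copies of η, the second on top of the first) is
order-isomorphic to `η`. -/
theorem eta_add_eta_orderIso :
    Nonempty (Lex (Eta ⊕ Eta) ≃o Eta) :=
  ⟨Finsupp.Lex.sumLexSelfOrderIso (Cardinal.unitSumLexIioOrdOrderIso (aleph0_le_aleph 1))⟩
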